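/- arXiv:1105.3122 — 6 statements merged into one kernel-verified Lean document; each statement's English description precedes it below -/
import Mathlib

section
/- For all integers n ≥ 1 and p ≥ 0, ∑_{k=0}^{p} (1/(nk - k + 1)) * C(nk, k) * C(n(p-k), p-k) = C(np+1, p), where the Fuss–Catalan factor 1/((n-1)k+1) * C(nk,k) is an integer. Equivalently, with D = n-1: ∑_{k=0}^{p} (1/(Dk+1)) C((D+1)k, k) · C((D+1)(p-k), p-k) = C((D+1)p+1, p). -/
open Finset

/-- Raney-type numbers: `a D x k = (x/(x+(D+1)k)) * C(x+(D+1)k, k)` in an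
integer-friendly form. -/
def fcA (D : ℕ) : ℕ → ℕ → ℚ
  | _, 0 => 1
  | x, (k+1) => (Nat.choose (x + (D+1)*k + D) (k+1) : ℚ)
      - (D : ℚ) * (Nat.choose (x + (D+1)*k + D) k : ℚ)

lemma fcA_zero_right (D x : ℕ) : fcA D x 0 = 1 := rfl

lemma fcA_zero (D k : ℕ) : fcA D 0 (k+1) = 0 := by
  have h := Nat.choose_succ_right_eq ((D+1)*k + D) k
  have hsub : (D+1)*k + D - k = D*k + D := by
    have hm : (D+1)*k = D*k + k := by ring
    omega
  rw [hsub] at h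
  have hq : ((Nat.choose ((D+1)*k + D) (k+1) : ℚ)) * ((k : ℚ)+1)
      = ((D : ℚ) * (Nat.choose ((D+1)*k + D) k : ℚ)) * ((k : ℚ)+1) := by
    have := congrArg (Nat.cast (R := ℚ)) h
    push_cast at this
    rw [this]; ring
  have hk : ((k : ℚ) + 1) ≠ 0 := by positivity
  have h2 := mul_right_cancel₀ hk hq
  simp only [fcA, Nat.zero_add, h2]
  ring

lemma fcA_rec (D x k : ℕ) :
    fcA D (x+1) (k+1) = fcA D x (k+1) + fcA D (x + (D+1)) k := by
  cases k with
  | zero =>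
      simp only [fcA, Nat.mul_zero, Nat.add_zero, Nat.zero_add, zero_add,
        Nat.choose_one_right, Nat.choose_zero_right]
      push_cast
      ring
  | succ k =>
      have e1 : x + 1 + (D+1)*(k+1) + D = (x + (D+1)*(k+1) + D) + 1 := by ring
      have e2 : x + (D+1) + (D+1)*k + D = x + (D+1)*(k+1) + D := by ring
      simp only [fcA, e1, e2, Nat.choose_succ_succ' (x + (D+1)*(k+1) + D)]
      push_cast
      ring

/-- Key convolution lemma. -/
lemma fcA_conv (D : ℕ) : ∀ n x : ℕ,
    ∑ k ∈ range (n+1), fcA D (x+1) k *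
        (Nat.choose ((D+1)*(n-k)) (n-k) : ℚ)
      = (Nat.choose (x+1+(D+1)*n) n : ℚ) := by
  intro n
  induction n with
  | zero => intro x; simp [fcA]
  | succ n ihn =>
      -- an abbreviation for the split of a sum of length n+2
      have hsplit : ∀ g : ℕ → ℚ,
          ∑ k ∈ range (n+2), g k * (Nat.choose ((D+1)*(n+1-k)) (n+1-k) : ℚ)
            = (∑ k ∈ range (n+1), g (k+1) * (Nat.choose ((D+1)*(n-k)) (n-k) : ℚ))
              + g 0 * (Nat.choose ((D+1)*(n+1)) (n+1) : ℚ) := by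
        intro g
        rw [Finset.sum_range_succ']
        congr 1
        · apply Finset.sum_congr rfl
          intro k _
          have hnk : n + 1 - (k+1) = n - k := by omega
          rw [hnk]
      intro x
      induction x with
      | zero =>
          have hzero := hsplit (fcA D (0+1))
          rw [hzero]
          have hstep : ∀ k ∈ range (n+1),
              fcA D (0+1) (k+1) * (Nat.choose ((D+1)*(n-k)) (n-k) : ℚ)
                = fcA D (D+1) k * (Nat.choose ((D+1)*(n-k)) (n-k) : ℚ) := by
            intro k _
            have h := fcA_rec D 0 k
            rw [fcA_zero D k] at h
            simp only [zero_add] at h ⊢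
            rw [h]
          rw [Finset.sum_congr rfl hstep]
          have h2 : ∑ k ∈ range (n+1), fcA D (D+1) k *
              (Nat.choose ((D+1)*(n-k)) (n-k) : ℚ)
              = (Nat.choose ((D+1)*(n+1)) n : ℚ) := by
            have := ihn D
            rw [show D + 1 + (D+1)*n = (D+1)*(n+1) by ring] at this
            exact this
          rw [h2, fcA_zero_right, one_mul]
          rw [show (0:ℕ)+1+(D+1)*(n+1) = ((D+1)*(n+1)) + 1 by ring]
          rw [Nat.choose_succ_succ' ((D+1)*(n+1)) n]
          push_cast
          ring
      | succ x ihx =>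
          rw [hsplit (fcA D (x+1+1))]
          have hstep : ∀ k ∈ range (n+1),
              fcA D (x+1+1) (k+1) * (Nat.choose ((D+1)*(n-k)) (n-k) : ℚ)
                = fcA D (x+1) (k+1) * (Nat.choose ((D+1)*(n-k)) (n-k) : ℚ)
                  + fcA D (x+1+(D+1)) k * (Nat.choose ((D+1)*(n-k)) (n-k) : ℚ) := by
            intro k _
            rw [fcA_rec D (x+1) k]
            ring
          rw [Finset.sum_congr rfl hstep, Finset.sum_add_distrib]
          have h2 : ∑ k ∈ range (n+1), fcA D (x+1+(D+1)) k *
              (Nat.choose ((D+1)*(n-k)) (n-k) : ℚ)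
              = (Nat.choose (x+1+(D+1)*(n+1)) n : ℚ) := by
            have h := ihn (x + (D+1))
            rw [show x + (D+1) + 1 + (D+1)*n = x+1+(D+1)*(n+1) by ring] at h
            rw [show x + (D+1) + 1 = x+1+(D+1) by ring] at h
            exact h
          rw [h2]
          have h1 : (∑ k ∈ range (n+1), fcA D (x+1) (k+1) *
              (Nat.choose ((D+1)*(n-k)) (n-k) : ℚ))
              + fcA D (x+1+1) 0 * (Nat.choose ((D+1)*(n+1)) (n+1) : ℚ)
              = (Nat.choose (x+1+(D+1)*(n+1)) (n+1) : ℚ) := by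
            rw [← ihx, hsplit (fcA D (x+1))]
            rw [fcA_zero_right, fcA_zero_right]
          rw [add_right_comm, h1]
          rw [show x+1+1+(D+1)*(n+1) = (x+1+(D+1)*(n+1)) + 1 by ring]
          rw [Nat.choose_succ_succ' (x+1+(D+1)*(n+1)) n]
          push_cast
          ring

lemma fcA_one (D k : ℕ) :
    fcA D 1 k = (1 / (D * k + 1 : ℚ)) * (Nat.choose ((D + 1) * k) k : ℚ) := by
  cases k with
  | zero => simp [fcA]
  | succ k =>
      have e1 : 1 + (D+1)*k + D = (D+1)*(k+1) := by ring
      simp only [fcA, e1]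
      have h := Nat.choose_succ_right_eq ((D+1)*(k+1)) k
      have hsub : (D+1)*(k+1) - k = D*k + D + 1 := by
        have hm : (D+1)*(k+1) = D*k + D + k + 1 := by ring
        omega
      rw [hsub] at h
      have hq : ((Nat.choose ((D+1)*(k+1)) (k+1) : ℚ)) * ((k:ℚ)+1)
          = (Nat.choose ((D+1)*(k+1)) k : ℚ) * ((D:ℚ)*k + D + 1) := by
        have := congrArg (Nat.cast (R := ℚ)) h
        push_cast at this
        linarith [this]
      have hk : ((k : ℚ) + 1) ≠ 0 := by positivity
      have hd : ((D : ℚ) * ((k:ℚ)+1) + 1) ≠ 0 := by positivity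
      push_cast
      field_simp
      nlinarith [hq]

/-- Fuss–Catalan convolution identity (Remark 4.4), together with the
integrality of the Fuss–Catalan factor. -/
theorem fuss_catalan_convolution (D : ℕ) (hD : 1 ≤ D) (p : ℕ) :
    (∑ k ∈ Finset.range (p + 1),
        (1 / (D * k + 1 : ℚ)) * (Nat.choose ((D + 1) * k) k) *
          (Nat.choose ((D + 1) * (p - k)) (p - k))
      = (Nat.choose ((D + 1) * p + 1) p : ℚ))
    ∧ ∀ k : ℕ, (D * k + 1) ∣ Nat.choose ((D + 1) * k) k := by
  constructor
  · have h := fcA_conv D p 0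
    have hterm : ∀ k ∈ range (p+1),
        (1 / (D * k + 1 : ℚ)) * (Nat.choose ((D + 1) * k) k : ℚ) *
            (Nat.choose ((D + 1) * (p - k)) (p - k) : ℚ)
          = fcA D (0+1) k * (Nat.choose ((D+1)*(p-k)) (p-k) : ℚ) := by
      intro k _
      have h1 : fcA D (0+1) k = fcA D 1 k := by norm_num
      rw [h1, fcA_one]
    rw [Finset.sum_congr rfl hterm, h,
      show (0:ℕ)+1+(D+1)*p = (D+1)*p+1 by ring]
  · intro k
    cases k with
    | zero => simp
    | succ k =>
        have e1 : 1 + (D+1)*k + D = (D+1)*(k+1) := by ring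
        have h1 : fcA D 1 (k+1) = (Nat.choose ((D+1)*(k+1)) (k+1) : ℚ)
            - (D : ℚ) * (Nat.choose ((D+1)*(k+1)) k : ℚ) := by
          simp only [fcA, e1]
        have h2 := fcA_one D (k+1)
        rw [h1] at h2
        have hd : ((D : ℚ) * ((k:ℚ)+1) + 1) ≠ 0 := by positivity
        have key : (((D * (k+1) + 1 : ℕ) : ℤ) *
            ((Nat.choose ((D+1)*(k+1)) (k+1) : ℤ)
              - (D : ℤ) * (Nat.choose ((D+1)*(k+1)) k : ℤ)) : ℚ)
            = ((Nat.choose ((D+1)*(k+1)) (k+1) : ℤ) : ℚ) := by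
          push_cast at h2 ⊢
          field_simp at h2
          nlinarith [h2]
        have keyZ : ((D * (k+1) + 1 : ℕ) : ℤ) *
            ((Nat.choose ((D+1)*(k+1)) (k+1) : ℤ)
              - (D : ℤ) * (Nat.choose ((D+1)*(k+1)) k : ℤ))
            = (Nat.choose ((D+1)*(k+1)) (k+1) : ℤ) := by
          exact_mod_cast key
        have hdvd : ((D * (k+1) + 1 : ℕ) : ℤ) ∣ (Nat.choose ((D+1)*(k+1)) (k+1) : ℤ) :=
          ⟨_, keyZ.symm⟩
        exact_mod_cast hdvd
end

section
/- As formal power series in g (with J a second formal variable), ∑_{p≥0} (1/((D+1)p+1)) C((D+1)p+1, p) g^p J^{Dp+1} · ∑_{p≥0} C((D+1)p, p) g^p J^{Dp} = ∑_{p≥0} C((D+1)p+1, p) g^p J^{Dp+1}, for every integer D ≥ 1. -/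
open PowerSeries

/-- Rothe numbers `A_k(x) = (x/(x+kz)) C(x+kz, k)` as rationals. -/
noncomputable def Aq (z k x : ℕ) : ℚ :=
  if k = 0 then 1 else ((x : ℚ) / (x + k * z)) * Nat.choose (x + k * z) k

def cq (z n y : ℕ) : ℚ := Nat.choose (y + n * z) n

lemma Aq_zero (z x : ℕ) : Aq z 0 x = 1 := by simp [Aq]

lemma Aq_zero_x (z k : ℕ) (hk : k ≠ 0) : Aq z k 0 = 0 := by simp [Aq, hk]

lemma Aq_eq (z k x : ℕ) (h : 0 < x + k * z) :
    Aq z k x = ((x : ℚ) / (x + k * z)) * Nat.choose (x + k * z) k := by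
  rcases Nat.eq_zero_or_pos k with hk | hk
  · subst hk
    have hx : (0:ℚ) < x := by exact_mod_cast (by omega : 0 < x)
    simp [Aq, div_self hx.ne']
  · simp [Aq, Nat.pos_iff_ne_zero.mp hk]

lemma Aq_rec (z k x : ℕ) (hz : 1 ≤ z) :
    Aq z (k + 1) (x + 1) = Aq z (k + 1) x + Aq z k (x + z) := by
  have hz0 : 0 < (k+1) * z := by positivity
  have e1 : x + 1 + (k + 1) * z = (x + (k + 1) * z) + 1 := by omega
  have e2 : x + z + k * z = x + (k + 1) * z := by ring
  rw [Aq_eq z (k+1) (x+1) (by omega), Aq_eq z (k+1) x (by omega),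
    Aq_eq z k (x+z) (by omega), e1, e2]
  generalize hg : x + (k + 1) * z = N
  have hNk : k ≤ N := by
    have : k + 1 ≤ (k+1) * z := Nat.le_mul_of_pos_right _ hz
    omega
  have hNpos : 0 < N := by omega
  have hrel : (Nat.choose N (k+1) : ℚ) * (k + 1) = (Nat.choose N k) * ((N : ℚ) - k) := by
    have h := Nat.choose_succ_right_eq N k
    calc (Nat.choose N (k+1) : ℚ) * (k + 1)
        = ((Nat.choose N (k+1) * (k+1) : ℕ) : ℚ) := by push_cast; ring
      _ = ((Nat.choose N k * (N - k) : ℕ) : ℚ) := by rw [h]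
      _ = (Nat.choose N k) * ((N : ℚ) - k) := by push_cast [hNk]; ring
  have hpascal : (Nat.choose (N+1) (k+1) : ℚ) = Nat.choose N k + Nat.choose N (k+1) := by
    rw [Nat.choose_succ_succ]; push_cast; ring
  have hNq : (N : ℚ) = x + (k+1) * z := by rw [← hg]; push_cast; ring
  push_cast
  rw [hpascal]
  rw [hNq] at hrel
  have hp : (0:ℚ) < (x:ℚ) + ((k:ℚ)+1) * z := by
    rw [← hNq]; exact_mod_cast hNpos
  have d2 : ((x:ℚ) + ((k:ℚ)+1) * z) ≠ 0 := hp.ne'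
  have d1 : ((x:ℚ) + 1 + ((k:ℚ)+1) * z) ≠ 0 := by intro h; linarith
  rw [show ((x:ℚ) + z + (k:ℚ) * z) = ((x:ℚ) + ((k:ℚ)+1) * z) by ring]
  field_simp
  linear_combination (z:ℚ) * hrel

lemma cq_zero (z y : ℕ) : cq z 0 y = 1 := by simp [cq]

lemma cq_pascal (z n x y : ℕ) :
    cq z (n + 1) (x + 1 + y) = cq z (n + 1) (x + y) + cq z n (x + z + y) := by
  unfold cq
  have e1 : x + 1 + y + (n + 1) * z = (x + y + (n + 1) * z) + 1 := by ring
  have e2 : x + z + y + n * z = x + y + (n + 1) * z := by ring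
  rw [e1, e2, Nat.choose_succ_succ]
  push_cast; ring

/-- Hagen–Rothe convolution: `∑ A_k(x) C(y+(n-k)z, n-k) = C(x+y+nz, n)`. -/
lemma rothe_conv (z : ℕ) (hz : 1 ≤ z) :
    ∀ n x y : ℕ, ∑ k ∈ Finset.range (n + 1), Aq z k x * cq z (n - k) y = cq z n (x + y) := by
  intro n
  induction n with
  | zero => intro x y; simp [Aq_zero, cq_zero]
  | succ n ihn =>
    intro x
    induction x with
    | zero =>
      intro y
      rw [Finset.sum_eq_single 0]
      · simp [Aq_zero]
      · intro k _ hk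
        rw [Aq_zero_x z k hk, zero_mul]
      · intro h; simp at h
    | succ x ihx =>
      intro y
      rw [Finset.sum_range_succ']
      simp only [Nat.succ_sub_succ, Nat.sub_zero]
      have step : ∀ k ∈ Finset.range (n + 1), Aq z (k + 1) (x + 1) * cq z (n - k) y
          = Aq z (k + 1) x * cq z (n - k) y + Aq z k (x + z) * cq z (n - k) y := by
        intro k _
        rw [Aq_rec z k x hz, add_mul]
      rw [Finset.sum_congr rfl step, Finset.sum_add_distrib, add_right_comm]
      have h2 := ihx y
      rw [Finset.sum_range_succ'] at h2
      simp only [Nat.succ_sub_succ, Nat.sub_zero, Aq_zero] at h2 ⊢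
      rw [h2, ihn (x + z) y, cq_pascal]

/-- Cauchy-product identity for the tree-generating series: as formal power
series in `g` with coefficients formal power series in `J`,
`(∑ (1/((D+1)p+1)) C((D+1)p+1,p) g^p J^{Dp+1}) · (∑ C((D+1)p,p) g^p J^{Dp})
  = ∑ C((D+1)p+1,p) g^p J^{Dp+1}`. -/
theorem tree_generating_series_product (D : ℕ) (hD : 1 ≤ D)
    (A B Csum : PowerSeries (PowerSeries ℚ))
    (hA : A = PowerSeries.mk fun (p : ℕ) =>
      ((1 / ((D + 1) * p + 1 : ℚ)) * (Nat.choose ((D + 1) * p + 1) p)) •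
        ((X : PowerSeries ℚ) ^ (D * p + 1)))
    (hB : B = PowerSeries.mk fun (p : ℕ) =>
      ((Nat.choose ((D + 1) * p) p : ℚ)) • ((X : PowerSeries ℚ) ^ (D * p)))
    (hC : Csum = PowerSeries.mk fun (p : ℕ) =>
      ((Nat.choose ((D + 1) * p + 1) p : ℚ)) • ((X : PowerSeries ℚ) ^ (D * p + 1))) :
    A * B = Csum := by
  have hz : 1 ≤ D + 1 := by omega
  subst hA hB hC
  ext n
  rw [PowerSeries.coeff_mul]
  simp only [PowerSeries.coeff_mk]
  rw [Finset.Nat.sum_antidiagonal_eq_sum_range_succ_mk]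
  have key : ∀ k ∈ Finset.range (n + 1),
      (((1 / ((D + 1) * k + 1 : ℚ)) * (Nat.choose ((D + 1) * k + 1) k)) •
          ((X : PowerSeries ℚ) ^ (D * k + 1))) *
        (((Nat.choose ((D + 1) * (n - k)) (n - k) : ℚ)) •
          ((X : PowerSeries ℚ) ^ (D * (n - k)))) =
      (Aq (D + 1) k 1 * cq (D + 1) (n - k) 0) • ((X : PowerSeries ℚ) ^ (D * n + 1)) := by
    intro k hk
    have hk' : k ≤ n := Nat.lt_succ_iff.mp (Finset.mem_range.mp hk)
    rw [smul_mul_assoc, mul_smul_comm, smul_smul, ← pow_add]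
    have hexp : D * k + 1 + D * (n - k) = D * n + 1 := by
      have h1 : D * (n - k) + D * k = D * n := by
        rw [← Nat.mul_add]
        congr 1
        omega
      omega
    rw [hexp]
    congr 1
    · rw [Aq_eq (D + 1) k 1 (by positivity)]
      rw [show 1 + k * (D + 1) = (D + 1) * k + 1 from by ring]
      unfold cq
      rw [show 0 + (n - k) * (D + 1) = (D + 1) * (n - k) from by ring]
      push_cast
      ring
  rw [Finset.sum_congr rfl key, ← Finset.sum_smul, rothe_conv (D + 1) hz n 1 0]
  unfold cq
  rw [show 1 + n * (D + 1) = (D + 1) * n + 1 from by ring]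
end

section
/- For every integer D ≥ 1 and p ≥ 0, the Fuss–Catalan numbers satisfy the bound C_p^{(D+1)} ≤ ((D+1)^{D+1}/D^D)^p, i.e. C_p^{(D+1)} · g_c^p ≤ 1 where g_c = D^D/(D+1)^{D+1}. -/
lemma binomA (a b : ℕ) : Nat.choose (a+b) a * (a^a * b^b) ≤ (a+b)^(a+b) := by
  rw [add_pow]
  have hmem : a ∈ Finset.range (a+b+1) := Finset.mem_range.mpr (by omega)
  have := Finset.single_le_sum (f := fun k => a^k * b^(a+b-k) * Nat.choose (a+b) k)
    (fun i _ => Nat.zero_le _) hmem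
  simpa [Nat.add_sub_cancel_left, mul_comm, mul_assoc, mul_left_comm] using this

lemma binomB (D p : ℕ) (hD : 1 ≤ D) (hp : 1 ≤ p) :
    Nat.choose ((D+1)*p+1) p ≤ 2 * Nat.choose ((D+1)*p) p := by
  obtain _ | k := p
  · omega
  set n := (D+1)*(k+1) with hn
  have h1 : Nat.choose (n+1) (k+1) = Nat.choose n k + Nat.choose n (k+1) :=
    Nat.choose_succ_succ n k
  have h2 : Nat.choose n k ≤ Nat.choose n (k+1) := by
    apply Nat.choose_le_succ_of_lt_half_left
    have : 2*(k+1) ≤ n := by rw [hn]; nlinarith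
    omega
  omega

lemma stepC (D p : ℕ) (hD : 1 ≤ D) (hp : 1 ≤ p) :
    (Nat.choose ((D+1)*p) p : ℚ) ≤ ((D + 1 : ℚ) ^ (D + 1) / (D : ℚ) ^ D) ^ p := by
  have hDq : (0:ℚ) < D := by exact_mod_cast hD
  have hpq : (0:ℚ) < (p:ℚ) := by exact_mod_cast hp
  have h := binomA p (D*p)
  have hrw : p + D*p = (D+1)*p := by ring
  rw [hrw] at h
  have h' : (Nat.choose ((D+1)*p) p : ℚ) * ((p:ℚ)^p * ((D:ℚ)*(p:ℚ))^(D*p))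
      ≤ (((D:ℚ)+1)*(p:ℚ))^((D+1)*p) := by exact_mod_cast h
  have hden : (0:ℚ) < (p:ℚ)^p * ((D:ℚ)*(p:ℚ))^(D*p) := by positivity
  have heq : (((D:ℚ)+1)*(p:ℚ))^((D+1)*p)
      = ((D + 1 : ℚ) ^ (D + 1) / (D : ℚ) ^ D) ^ p * ((p:ℚ)^p * ((D:ℚ)*(p:ℚ))^(D*p)) := by
    rw [div_pow, ← pow_mul, ← pow_mul, div_mul_eq_mul_div, eq_div_iff (by positivity),
      mul_pow, ← hrw, pow_add, mul_pow]
    ring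
  rw [heq] at h'
  exact le_of_mul_le_mul_right h' hden

/-- Exponential entropy bound: `C_p^{(D+1)} ≤ ((D+1)^{D+1}/D^D)^p`. -/
theorem fuss_catalan_exponential_bound (D : ℕ) (hD : 1 ≤ D) (p : ℕ) :
    (1 / ((D + 1) * p + 1 : ℚ)) * (Nat.choose ((D + 1) * p + 1) p)
      ≤ ((D + 1 : ℚ) ^ (D + 1) / (D : ℚ) ^ D) ^ p := by
  rcases Nat.eq_zero_or_pos p with rfl | hp
  · simp
  have hq := stepC D p hD hp
  have hB : (Nat.choose ((D+1)*p+1) p : ℚ) ≤ 2 * Nat.choose ((D+1)*p) p := by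
    exact_mod_cast binomB D p hD hp
  have hm : (2:ℚ) ≤ ((D+1)*p+1 : ℚ) := by
    have : (2:ℕ) ≤ (D+1)*p+1 := by nlinarith
    exact_mod_cast this
  have hm0 : (0:ℚ) < ((D+1)*p+1 : ℚ) := by linarith
  have h2 : 1/((D+1)*p+1 : ℚ) * 2 ≤ 1 := by
    rw [div_mul_eq_mul_div, one_mul, div_le_one hm0]; linarith
  calc (1 / ((D + 1) * p + 1 : ℚ)) * (Nat.choose ((D + 1) * p + 1) p)
      ≤ (1 / ((D + 1) * p + 1 : ℚ)) * (2 * Nat.choose ((D+1)*p) p) := by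
        apply mul_le_mul_of_nonneg_left hB (by positivity)
    _ = (1/((D+1)*p+1 : ℚ) * 2) * Nat.choose ((D+1)*p) p := by ring
    _ ≤ 1 * Nat.choose ((D+1)*p) p := mul_le_mul_of_nonneg_right h2 (by positivity)
    _ = (Nat.choose ((D+1)*p) p : ℚ) := one_mul _
    _ ≤ ((D + 1 : ℚ) ^ (D + 1) / (D : ℚ) ^ D) ^ p := hq
end

section
/- Let D ≥ 3 and suppose a connected vacuum colored graph with 2p vertices has degree 0, i.e. its number of faces satisfies F = (D(D-1)/2)p + D. Let F_s denote the number of faces with 2s vertices, so that ∑_s F_s = F and ∑_s s·F_s = (D(D+1)/2)p (each vertex lies on D(D+1)/2 faces). Then F_1 = 2D + ∑_{s≥3}(s-2)F_s + (D(D-3)/2)p; in particular F_1 ≥ 2D ≥ 1, i.e. there exists a face with exactly two vertices. -/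
lemma face_aux (D : ℕ) (hD : 3 ≤ D) :
    2 * (D * (D - 1) / 2) = D * (D + 1) / 2 + D * (D - 3) / 2 := by
  obtain ⟨a, ha⟩ : 2 ∣ D * (D - 1) := by
    rcases Nat.even_or_odd D with ⟨k, hk⟩ | ⟨k, hk⟩
    · exact ⟨k * (D - 1), by rw [hk]; ring⟩
    · refine ⟨D * k, ?_⟩
      have h : D - 1 = 2 * k := by omega
      rw [h]; ring
  obtain ⟨b, hb⟩ : 2 ∣ D * (D + 1) := by
    rcases Nat.even_or_odd D with ⟨k, hk⟩ | ⟨k, hk⟩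
    · exact ⟨k * (D + 1), by rw [hk]; ring⟩
    · refine ⟨D * (k + 1), ?_⟩
      have h : D + 1 = 2 * (k + 1) := by omega
      rw [h]; ring
  obtain ⟨c, hc⟩ : 2 ∣ D * (D - 3) := by
    rcases Nat.even_or_odd D with ⟨k, hk⟩ | ⟨k, hk⟩
    · exact ⟨k * (D - 3), by rw [hk]; ring⟩
    · refine ⟨D * (k - 1), ?_⟩
      have h : D - 3 = 2 * (k - 1) := by omega
      rw [h]; ring
  have p1 : D * (D + 1) = D * (D - 1) + 2 * D := by
    have h : D - 1 + 2 = D + 1 := by omega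
    calc D * (D + 1) = D * (D - 1 + 2) := by rw [h]
      _ = D * (D - 1) + 2 * D := by ring
  have p2 : D * (D - 1) = D * (D - 3) + 2 * D := by
    have h : D - 3 + 2 = D - 1 := by omega
    calc D * (D - 1) = D * (D - 3 + 2) := by rw [h]
      _ = D * (D - 3) + 2 * D := by ring
  rw [ha, hb, hc, Nat.mul_div_cancel_left a (by norm_num), Nat.mul_div_cancel_left b (by norm_num),
    Nat.mul_div_cancel_left c (by norm_num)]
  omega

/-- Arithmetic core of Lemma 3.1: in a degree-zero graph in dimension `D ≥ 3`,
with `F_s` faces of `2s` vertices, `F_1 = 2D + ∑_{s≥3}(s-2)F_s + (D(D-3)/2)p`;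
in particular there is a face with exactly two vertices. -/
theorem face_with_two_vertices (D p : ℕ) (hD : 3 ≤ D) (hp : 1 ≤ p)
    (F : ℕ →₀ ℕ) (hF0 : F 0 = 0)
    (hsum : ∑ s ∈ F.support, F s = D * (D - 1) / 2 * p + D)
    (hvert : ∑ s ∈ F.support, s * F s = D * (D + 1) / 2 * p) :
    F 1 = 2 * D + (∑ s ∈ F.support.filter (fun s => 3 ≤ s), (s - 2) * F s)
        + D * (D - 3) / 2 * p
    ∧ 1 ≤ F 1 := by
  have h1 : F 1 = ∑ s ∈ F.support, (if s = 1 then F s else 0) := by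
    rw [Finset.sum_ite_eq' F.support 1 F]
    by_cases h : (1 : ℕ) ∈ F.support
    · simp [h]
    · simp [h, Finsupp.notMem_support_iff.mp h]
  have hfil : (∑ s ∈ F.support.filter (fun s => 3 ≤ s), (s - 2) * F s)
      = ∑ s ∈ F.support, (if 3 ≤ s then (s - 2) * F s else 0) :=
    Finset.sum_filter _ _
  have key : 2 * (∑ s ∈ F.support, F s)
        + (∑ s ∈ F.support.filter (fun s => 3 ≤ s), (s - 2) * F s)
      = (∑ s ∈ F.support, s * F s) + F 1 := by
    rw [hfil, h1, Finset.mul_sum, ← Finset.sum_add_distrib, ← Finset.sum_add_distrib]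
    refine Finset.sum_congr rfl ?_
    intro s hs
    have hs0 : s ≠ 0 := by
      intro h; rw [h] at hs; exact (Finsupp.mem_support_iff.mp hs) hF0
    by_cases h3 : 3 ≤ s
    · rw [if_pos h3, if_neg (by omega : ¬ s = 1)]
      zify [show (2 : ℕ) ≤ s from by omega]
      ring
    · interval_cases s <;> simp <;> omega
  have hq := face_aux D hD
  have hq' : 2 * (D * (D - 1) / 2 * p) = D * (D + 1) / 2 * p + D * (D - 3) / 2 * p := by
    rw [← add_mul, ← hq]; ring
  rw [hsum, hvert] at key
  have main : F 1 = 2 * D + (∑ s ∈ F.support.filter (fun s => 3 ≤ s), (s - 2) * F s)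
      + D * (D - 3) / 2 * p := by linarith [key, hq']
  refine ⟨main, ?_⟩
  have h2D : 2 * D ≤ F 1 := by
    rw [main]; exact le_trans (Nat.le_add_right _ _) (Nat.le_add_right _ _)
  omega
end

section
/- Let D ≥ 2. Given nonnegative integers (F_s)_{s≥1} with ∑_{s≥1} F_s = (D(D-1)/2)p + D and ∑_{s≥1} s·F_s = (D(D+1)/2)p for some integer p ≥ 0, if D = 2 then F_1 = 4 + ∑_{s≥3}(s-2)F_s - p, which can vanish; whereas if D ≥ 3 then F_1 ≥ 2D > 0. -/
lemma key_identity (F : ℕ →₀ ℕ) (hF0 : F 0 = 0) :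
    ∑ s ∈ F.support, s * F s + F 1
      = 2 * ∑ s ∈ F.support, F s
        + ∑ s ∈ F.support.filter (fun s => 3 ≤ s), (s - 2) * F s := by
  have h1 : F 1 = ∑ s ∈ F.support, (if s = 1 then F s else 0) := by
    rw [Finset.sum_ite_eq' F.support 1 F]
    by_cases h : (1 : ℕ) ∈ F.support
    · simp [h]
    · simp [h, Finsupp.notMem_support_iff.mp h]
  have h2 : ∑ s ∈ F.support.filter (fun s => 3 ≤ s), (s - 2) * F s
      = ∑ s ∈ F.support, (if 3 ≤ s then (s - 2) * F s else 0) := by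
    rw [Finset.sum_filter]
  rw [h1, h2, Finset.mul_sum, ← Finset.sum_add_distrib, ← Finset.sum_add_distrib]
  apply Finset.sum_congr rfl
  intro s hs
  have hs0 : s ≠ 0 := by
    intro h; rw [h] at hs; exact (Finsupp.mem_support_iff.mp hs) hF0
  rcases Nat.lt_or_ge s 3 with h3 | h3
  · interval_cases s <;> simp [hF0] <;> ring
  · obtain ⟨k, rfl⟩ : ∃ k, s = k + 3 := ⟨s - 3, by omega⟩
    have : k + 3 - 2 = k + 1 := by omega
    simp only [this, if_pos (by omega : 3 ≤ k + 3), if_neg (by omega : ¬ k + 3 = 1)]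
    ring

/-- Why the melonic analysis requires `D ≥ 3`: with the face-count constraints,
for `D = 2` one gets `F₁ = 4 + ∑_{s≥3}(s-2)F_s − p` (which can vanish), while
for `D ≥ 3` one has `F₁ ≥ 2D > 0`. -/
theorem short_faces_dimension_dichotomy (D p : ℕ) (hD : 2 ≤ D)
    (F : ℕ →₀ ℕ) (hF0 : F 0 = 0)
    (hsum : ∑ s ∈ F.support, F s = D * (D - 1) / 2 * p + D)
    (hvert : ∑ s ∈ F.support, s * F s = D * (D + 1) / 2 * p) :
    (D = 2 → F 1 + p = 4 + ∑ s ∈ F.support.filter (fun s => 3 ≤ s), (s - 2) * F s)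
    ∧ (3 ≤ D → 2 * D ≤ F 1 ∧ 0 < F 1) := by
  have key := key_identity F hF0
  rw [hsum, hvert] at key
  constructor
  · intro h2; subst h2
    norm_num at key
    omega
  · intro h3
    set S := ∑ s ∈ F.support.filter (fun s => 3 ≤ s), (s - 2) * F s with hS
    -- divisibility facts
    have e1 : D * (D - 1) / 2 * 2 = D * (D - 1) := by
      refine Nat.div_mul_cancel ?_
      rcases Nat.even_or_odd D with h | h
      · exact Dvd.dvd.mul_right h.two_dvd _
      · obtain ⟨k, hk⟩ := h
        exact Dvd.dvd.mul_left ⟨k, by omega⟩ _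
    have e2 : D * (D + 1) / 2 * 2 = D * (D + 1) := by
      refine Nat.div_mul_cancel ?_
      rcases Nat.even_or_odd D with h | h
      · exact Dvd.dvd.mul_right h.two_dvd _
      · obtain ⟨k, hk⟩ := h
        exact Dvd.dvd.mul_left ⟨k + 1, by omega⟩ _
    have hle : D * (D + 1) / 2 ≤ 2 * (D * (D - 1) / 2) := by
      have : D * (D + 1) ≤ 2 * (D * (D - 1)) := by
        have : D * (D + 1) ≤ D * (2 * (D - 1)) :=
          Nat.mul_le_mul_left D (by omega)
        calc D * (D + 1) ≤ D * (2 * (D - 1)) := this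
          _ = 2 * (D * (D - 1)) := by ring
      omega
    have hlep : D * (D + 1) / 2 * p ≤ 2 * (D * (D - 1) / 2) * p :=
      Nat.mul_le_mul_right p hle
    have h2ap : 2 * (D * (D - 1) / 2) * p = 2 * (D * (D - 1) / 2 * p) := by ring
    set x := D * (D - 1) / 2 * p
    set y := D * (D + 1) / 2 * p
    omega
end

section
/- Let D = 3 and for 0 < g < 2^{-8}·3^3 define v = (g^{1/3}/2^{1/3})·[(1+√(1−(2^8/3^3)g))^{1/3} + (1−√(1−(2^8/3^3)g))^{1/3}] and G = ((1+4v)^{1/4} − (2−(1+4v)^{1/2})^{1/2}) / (2(vg)^{1/4}). Then G satisfies G = 1 + g·G^4. -/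
/-!
Ferrari's method. The resolvent cubic of `g G⁴ - G + 1` is `v³ = g (1 + 4v)`, and `v` is its
Cardano root: with `a, b = (g/2)(1 ± s)`, `s = √(1 - 256g/27)`, one has `a + b = g` and
`ab = (4g/3)³`, so `v = ∛a + ∛b` satisfies `v³ = 4g v + g`. Put `A = (1 + 4v)^(1/4)` and
`u = (vg)^(1/4)`, so that `uA = v`. Then `4v (g G⁴ - G + 1)` splits over `ℝ` as
`(2u²G² - 2uAG + A² - 1)(2u²G² + 2uAG + A² + 1)`, and `G = (A - √(2 - A²)) / (2u)` is a root
of the first factor. The bound `g < 27/256` forces `v ≤ 3/4`, i.e. `A² ≤ 2`.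
-/

open Real

lemma rpow_one_div_pow {x : ℝ} (hx : 0 ≤ x) {n : ℕ} (hn : n ≠ 0) :
    (x ^ ((1 : ℝ) / n)) ^ n = x := by
  rw [one_div]; exact rpow_inv_natCast_pow hx hn

lemma pow_rpow_one_div {x : ℝ} (hx : 0 ≤ x) {n : ℕ} (hn : n ≠ 0) :
    (x ^ n) ^ ((1 : ℝ) / n) = x := by
  rw [one_div]; exact pow_rpow_inv_natCast hx hn

lemma cbrt_add_cbrt_cube {a b : ℝ} (ha : 0 ≤ a) (hb : 0 ≤ b) :
    (a ^ ((1 : ℝ) / 3) + b ^ ((1 : ℝ) / 3)) ^ 3 =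
      3 * (a * b) ^ ((1 : ℝ) / 3) * (a ^ ((1 : ℝ) / 3) + b ^ ((1 : ℝ) / 3)) + (a + b) := by
  have ha3 : (a ^ ((1 : ℝ) / 3)) ^ 3 = a := rpow_one_div_pow ha three_ne_zero
  have hb3 : (b ^ ((1 : ℝ) / 3)) ^ 3 = b := rpow_one_div_pow hb three_ne_zero
  rw [mul_rpow ha hb]
  linear_combination ha3 + hb3

lemma one_sub_sqrt_one_sub_nonneg {x : ℝ} (hx : 0 ≤ x) : 0 ≤ 1 - √(1 - x) :=
  sub_nonneg.2 <| sqrt_le_one.2 <| by linarith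

noncomputable def cardanoRoot (g : ℝ) : ℝ :=
  g ^ ((1 : ℝ) / 3) / 2 ^ ((1 : ℝ) / 3) *
    ((1 + √(1 - 2 ^ 8 / 3 ^ 3 * g)) ^ ((1 : ℝ) / 3) +
      (1 - √(1 - 2 ^ 8 / 3 ^ 3 * g)) ^ ((1 : ℝ) / 3))

section cardanoRoot

variable {g : ℝ}

lemma cardanoRoot_eq (hg : 0 ≤ g) :
    cardanoRoot g = (g / 2 * (1 + √(1 - 2 ^ 8 / 3 ^ 3 * g))) ^ ((1 : ℝ) / 3) +
      (g / 2 * (1 - √(1 - 2 ^ 8 / 3 ^ 3 * g))) ^ ((1 : ℝ) / 3) := by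
  have hs : 0 ≤ 1 - √(1 - 2 ^ 8 / 3 ^ 3 * g) := one_sub_sqrt_one_sub_nonneg (by positivity)
  rw [cardanoRoot, ← div_rpow hg zero_le_two, mul_add,
    ← mul_rpow (by positivity) (by positivity), ← mul_rpow (by positivity) hs]

lemma cardanoRoot_pos (hg : 0 < g) : 0 < cardanoRoot g := by
  rw [cardanoRoot_eq hg.le]
  have hs : 0 ≤ 1 - √(1 - 2 ^ 8 / 3 ^ 3 * g) := one_sub_sqrt_one_sub_nonneg (by positivity)
  positivity

lemma cardanoRoot_cube (hg : 0 ≤ g) (hg' : g ≤ 27 / 256) :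
    cardanoRoot g ^ 3 = g * (1 + 4 * cardanoRoot g) := by
  have hs : 0 ≤ 1 - √(1 - 2 ^ 8 / 3 ^ 3 * g) := one_sub_sqrt_one_sub_nonneg (by positivity)
  rw [cardanoRoot_eq hg, cbrt_add_cbrt_cube (by positivity) (by positivity)]
  set s := √(1 - 2 ^ 8 / 3 ^ 3 * g)
  have hs2 : s ^ 2 = 1 - 2 ^ 8 / 3 ^ 3 * g := sq_sqrt (by linarith)
  have hprod : g / 2 * (1 + s) * (g / 2 * (1 - s)) = (4 * g / 3) ^ 3 := by
    linear_combination (-g ^ 2 / 4) * hs2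
  have hcbrt : ((4 * g / 3) ^ 3) ^ ((1 : ℝ) / 3) = 4 * g / 3 :=
    pow_rpow_one_div (by positivity) three_ne_zero
  rw [hprod, hcbrt]
  ring

end cardanoRoot

lemma le_three_div_four_of_cube_eq {g v : ℝ} (hg' : g < 27 / 256) (hv : 0 ≤ v)
    (hcubic : v ^ 3 = g * (1 + 4 * v)) : v ≤ 3 / 4 := by
  nlinarith [sq_nonneg (8 * v + 3), sq_nonneg v]

lemma quartic_factorization (u A v g G : ℝ) (huA : u * A = v) (hu : u ^ 4 = v * g)
    (hA : A ^ 4 = 1 + 4 * v) :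
    (2 * u ^ 2 * G ^ 2 - 2 * u * A * G + A ^ 2 - 1) *
        (2 * u ^ 2 * G ^ 2 + 2 * u * A * G + A ^ 2 + 1) =
      4 * v * (g * G ^ 4 - G + 1) := by
  linear_combination 4 * G ^ 4 * hu - 4 * G * huA + hA

lemma ferrari_root {u A t v g : ℝ} (hu : u ≠ 0) (hv : v ≠ 0) (huA : u * A = v)
    (hu4 : u ^ 4 = v * g) (hA4 : A ^ 4 = 1 + 4 * v) (ht : t ^ 2 = 2 - A ^ 2) :
    (A - t) / (2 * u) = 1 + g * ((A - t) / (2 * u)) ^ 4 := by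
  set G := (A - t) / (2 * u) with hG
  have hquad : 2 * u ^ 2 * G ^ 2 - 2 * u * A * G + A ^ 2 - 1 = 0 := by
    rw [hG]; field_simp; linear_combination ht
  have hquartic := quartic_factorization u A v g G huA hu4 hA4
  rw [hquad, zero_mul, eq_comm, mul_eq_zero] at hquartic
  have : g * G ^ 4 - G + 1 = 0 := hquartic.resolve_left (by positivity)
  linarith

noncomputable def ferrariRoot (g v : ℝ) : ℝ :=
  ((1 + 4 * v) ^ ((1 : ℝ) / 4) - (2 - (1 + 4 * v) ^ ((1 : ℝ) / 2)) ^ ((1 : ℝ) / 2)) /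
    (2 * (v * g) ^ ((1 : ℝ) / 4))

lemma ferrariRoot_eq {g v : ℝ} (hg : 0 < g) (hv : 0 < v) (hcubic : v ^ 3 = g * (1 + 4 * v))
    (hv' : v ≤ 3 / 4) : ferrariRoot g v = 1 + g * ferrariRoot g v ^ 4 := by
  set A := (1 + 4 * v) ^ ((1 : ℝ) / 4) with hA
  set u := (v * g) ^ ((1 : ℝ) / 4)
  have hA0 : 0 < A := by positivity
  have hu0 : 0 < u := by positivity
  have hA4 : A ^ 4 = 1 + 4 * v := rpow_one_div_pow (by positivity) four_ne_zero
  have hu4 : u ^ 4 = v * g := rpow_one_div_pow (by positivity) four_ne_zero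
  have hsqrt : (1 + 4 * v) ^ ((1 : ℝ) / 2) = A ^ 2 := by
    rw [hA, ← rpow_natCast, ← rpow_mul (by positivity)]
    norm_num
  have huA : u * A = v := by
    refine (pow_left_inj₀ (by positivity) hv.le four_ne_zero).1 ?_
    linear_combination A ^ 4 * hu4 + v * g * hA4 - v * hcubic
  have ht : ((2 - A ^ 2) ^ ((1 : ℝ) / 2)) ^ 2 = 2 - A ^ 2 :=
    rpow_one_div_pow (by nlinarith) two_ne_zero
  rw [ferrariRoot, hsqrt]
  exact ferrari_root hu0.ne' hv.ne' huA hu4 hA4 ht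

/-- Explicit closed-form solution of the quartic melonic equation `G = 1 + g G⁴`
in dimension `D = 3`, for `0 < g < 2⁻⁸·3³ = 27/256`. -/
theorem melonic_closed_form_D3 (g v G : ℝ)
    (hg : 0 < g) (hg' : g < 27 / 256)
    (hv : v = g ^ ((1 : ℝ) / 3) / 2 ^ ((1 : ℝ) / 3) *
      ((1 + Real.sqrt (1 - 2 ^ 8 / 3 ^ 3 * g)) ^ ((1 : ℝ) / 3) +
        (1 - Real.sqrt (1 - 2 ^ 8 / 3 ^ 3 * g)) ^ ((1 : ℝ) / 3)))
    (hG : G = ((1 + 4 * v) ^ ((1 : ℝ) / 4) -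
        (2 - (1 + 4 * v) ^ ((1 : ℝ) / 2)) ^ ((1 : ℝ) / 2)) /
      (2 * (v * g) ^ ((1 : ℝ) / 4))) :
    G = 1 + g * G ^ 4 := by
  replace hv : v = cardanoRoot g := hv
  replace hG : G = ferrariRoot g v := hG
  have hv0 : 0 < v := hv ▸ cardanoRoot_pos hg
  have hcubic : v ^ 3 = g * (1 + 4 * v) := hv ▸ cardanoRoot_cube hg.le hg'.le
  rw [hG]
  exact ferrariRoot_eq hg hv0 hcubic (le_three_div_four_of_cube_eq hg' hv0.le hcubic)
end
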